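/- arXiv:2006.02408 — 3 statements merged into one kernel-verified Lean document; each statement's English description precedes it below -/
import Mathlib

section
/- Let S and T be strings over an alphabet Σ and let (s_1, …, s_k) be a maximal block decomposition of S with respect to T. Then every fragment of S that occurs as a substring of T is contained in the concatenation of at most three consecutive blocks; equivalently, if an occurrence S[p..q] of a substring of T overlaps the blocks s_a, s_{a+1}, …, s_b of the decomposition (where blocks are identified with their positions in S), then b − a ≤ 2. -/
/-- A block decomposition of `S` with respect to `T`: a sequence of nonempty
strings whose concatenation is `S`, each being a substring of `T`. -/
def IsBlockDecomp {α : Type*} (T : List α) (bs : List (List α)) (S : List α) : Prop :=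
  bs.flatten = S ∧ ∀ b ∈ bs, b ≠ [] ∧ b <:+: T

/-- A maximal block decomposition: additionally, the concatenation of any two
consecutive blocks is not a substring of `T`. -/
def IsMaximalBlockDecomp {α : Type*} (T : List α) (bs : List (List α)) (S : List α) : Prop :=
  IsBlockDecomp T bs S ∧
    ∀ i, i + 1 < bs.length → ¬ (bs.getD i [] ++ bs.getD (i + 1) []) <:+: T

/-- The (0-indexed) starting position of block `i` inside the decomposed string. -/
def blockStart {α : Type*} (bs : List (List α)) (i : ℕ) : ℕ :=
  ((bs.take i).flatten).length

lemma blockStart_succ {α : Type*} (bs : List (List α)) (i : ℕ) (h : i < bs.length) :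
    blockStart bs (i+1) = blockStart bs i + (bs.getD i []).length := by
  unfold blockStart
  rw [List.take_succ, List.getElem?_eq_getElem h, List.flatten_append, List.length_append,
    List.getD_eq_getElem bs [] h]
  simp

lemma blockStart_mono {α : Type*} (bs : List (List α)) {i j : ℕ} (h : i ≤ j) :
    blockStart bs i ≤ blockStart bs j := by
  unfold blockStart
  have : bs.take j = bs.take i ++ (bs.drop i).take (j - i) := by
    rw [← List.take_add]; congr 1; omega
  rw [this]
  simp

lemma seg_infix {α : Type*} (S : List α) (p len s L : ℕ) (hp : p ≤ s)
    (hL : s + L ≤ p + len) :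
    (S.drop s).take L <:+: (S.drop p).take len := by
  have h1 : ((S.drop p).take len).drop (s - p) = (S.drop s).take (len - (s - p)) := by
    rw [List.drop_take, List.drop_drop]
    congr 2
    omega
  have h2 : (S.drop s).take L = (((S.drop p).take len).drop (s - p)).take L := by
    rw [h1, List.take_take, Nat.min_eq_left (by omega)]
  rw [h2]
  exact ((List.take_prefix _ _).isInfix).trans ((List.drop_suffix _ _).isInfix)

/-- Any fragment of `S` occurring in `T` overlaps at most three consecutive blocks
of a maximal block decomposition: if the (nonempty) occurrence, starting at
(0-indexed) position `p` and of length `len`, overlaps blocks `a` and `c` with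
`a ≤ c`, then `c ≤ a + 2`. -/
theorem lcs_three_blocks {α : Type*} (S T : List α) (bs : List (List α))
    (hdec : IsMaximalBlockDecomp T bs S)
    (p len : ℕ) (hlen : 1 ≤ len) (hq : p + len ≤ S.length)
    (hX : (S.drop p).take len <:+: T)
    (a c : ℕ) (ha : a < bs.length) (hc : c < bs.length) (hac : a ≤ c)
    (hoa : blockStart bs a < p + len ∧ p < blockStart bs a + (bs.getD a []).length)
    (hoc : blockStart bs c < p + len ∧ p < blockStart bs c + (bs.getD c []).length) :
    c ≤ a + 2 := by
  by_contra hcon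
  have h3 : a + 3 ≤ c := by omega
  have h1 : a + 1 < bs.length := by omega
  have h2 : a + 2 < bs.length := by omega
  set b1 := bs.getD (a+1) [] with hb1
  set b2 := bs.getD (a+2) [] with hb2
  -- decompose S
  have hSflat : bs.flatten = S := hdec.1.1
  have hsplit : S = (bs.take (a+1)).flatten ++ ((b1 ++ b2) ++ (bs.drop (a+3)).flatten) := by
    rw [← hSflat]
    conv_lhs => rw [← List.take_append_drop (a+1) bs]
    rw [List.drop_eq_getElem_cons h1, List.drop_eq_getElem_cons (by omega : a + 2 < bs.length)]
    simp only [List.flatten_append, List.flatten_cons, hb1, hb2,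
      List.getD_eq_getElem bs [] h1, List.getD_eq_getElem bs [] h2, List.append_assoc]
  set s := blockStart bs (a+1) with hs
  set L := (b1 ++ b2).length with hLdef
  have hW : (S.drop s).take L = b1 ++ b2 := by
    rw [hsplit]
    have : s = ((bs.take (a+1)).flatten).length := rfl
    rw [this, List.drop_left]
    exact List.take_left' rfl
  -- bounds
  have hps : p < s := by
    have := blockStart_succ bs a ha
    rw [hs, this]; exact hoa.2
  have hsL : s + L ≤ p + len := by
    have e1 : blockStart bs (a+2) = s + b1.length := blockStart_succ bs (a+1) h1
    have e2 : blockStart bs (a+3) = blockStart bs (a+2) + b2.length :=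
      blockStart_succ bs (a+2) h2
    have e3 : blockStart bs (a+3) ≤ blockStart bs c := blockStart_mono bs h3
    have := hoc.1
    simp only [hLdef, List.length_append]
    omega
  have hinf : (b1 ++ b2) <:+: T := by
    rw [← hW]
    exact (seg_infix S p len s L (le_of_lt hps) hsL).trans hX
  exact hdec.2 (a+1) (by omega) hinf
end

section
/- Let (s_1, …, s_k) be a maximal block decomposition of a string S with respect to a string T, with the convention that s_0 and s_{k+1} denote the empty string. Fix i ∈ {1, …, k}, write s_i = u x v where x is a single letter and u, v are (possibly empty) strings, let y be a letter that occurs in T, and let S' = s_1 ⋯ s_{i−1} · u y v · s_{i+1} ⋯ s_k be the string obtained from S by substituting y for this occurrence of x. Then there exists a sequence of nonempty strings (t_1, …, t_m) with 1 ≤ m ≤ 5 such that t_1 ⋯ t_m = s_{i−1} u y v s_{i+1}, each t_j is a substring of T, and (s_1, …, s_{i−2}, t_1, …, t_m, s_{i+2}, …, s_k) is a maximal block decomposition of S' with respect to T. Moreover, such a sequence is obtained from the sequence (s_{i−1}, u, y, v, s_{i+1}) (with empty entries removed) by at most four merges of two adjacent entries whose concatenation is a substring of T. -/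
/-- The `j`-th block (1-indexed): `blk bs j = s_j` for `j ∈ {1, …, k}`, and the
empty string for `j ∉ {1, …, k}` (in particular for `j = 0` and `j = k + 1`). -/
def blk {α : Type*} (bs : List (List α)) (j : ℕ) : List α :=
  if j = 0 then [] else bs.getD (j - 1) []

/-- A merge replaces two adjacent entries of a sequence of strings, whose
concatenation is a substring of `T`, by their concatenation. -/
def MergeStep {α : Type*} (T : List α) (xs ys : List (List α)) : Prop :=
  ∃ (l₁ l₂ : List (List α)) (a b : List α),
    xs = l₁ ++ a :: b :: l₂ ∧ ys = l₁ ++ (a ++ b) :: l₂ ∧ (a ++ b) <:+: T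

/-- `MergesWithin T n xs ys` holds when `ys` is obtained from `xs` by at most `n`
merges of adjacent entries whose concatenation is a substring of `T`. -/
def MergesWithin {α : Type*} (T : List α) : ℕ → List (List α) → List (List α) → Prop
  | 0, xs, ys => xs = ys
  | n + 1, xs, ys => xs = ys ∨ ∃ zs, MergeStep T xs zs ∧ MergesWithin T n zs ys

/-!
Merge adjacent entries of `(s_{i-1}, u, y, v, s_{i+1})` greedily as long as some concatenation
occurs in `T`. Each merge shortens the sequence, so at most four merges happen, and the result is
a sequence of substrings of `T` with no two adjacent entries mergeable. Merging only extends the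
first entry to the right and the last entry to the left, and if `a ++ b` is not a substring of `T`
then neither is any string containing it. Hence the result stays unmergeable with `s_{i-2}` and
`s_{i+2}`, because `s_{i-1}` and `s_{i+1}` were.
-/

section MaximalBlockDecomp

variable {α : Type*}

def Unmergeable (T a b : List α) : Prop :=
  ¬ (a ++ b) <:+: T

namespace Unmergeable

variable {T a b a' b' : List α}

theorem mono (h : Unmergeable T a b) (ha : a <:+ a') (hb : b <+: b') : Unmergeable T a' b' := by
  obtain ⟨c, rfl⟩ := ha
  obtain ⟨d, rfl⟩ := hb
  exact fun h' => h (List.IsInfix.trans ⟨c, d, by simp⟩ h')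

theorem ne_nil_left (h : Unmergeable T a b) (hb : b <:+: T) : a ≠ [] := by
  rintro rfl
  exact h hb

theorem ne_nil_right (h : Unmergeable T a b) (ha : a <:+: T) : b ≠ [] := by
  rintro rfl
  exact h (by simpa using ha)

end Unmergeable

theorem isMaximalBlockDecomp_iff {T S : List α} {bs : List (List α)} :
    IsMaximalBlockDecomp T bs S ↔ IsBlockDecomp T bs S ∧ bs.IsChain (Unmergeable T) := by
  rw [IsMaximalBlockDecomp, List.isChain_iff_getElem]
  refine and_congr_right fun _ => forall_congr' fun j => forall_congr' fun hj => ?_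
  rw [List.getD_eq_getElem _ _ (by omega), List.getD_eq_getElem _ _ hj, Unmergeable]

theorem List.IsChain.append_append {β : Type*} {r : β → β → Prop} {L M R : List β}
    (hL : L.IsChain r) (hM : M.IsChain r) (hR : R.IsChain r) (hM₀ : M ≠ [])
    (hLM : ∀ a ∈ L.getLast?, ∀ b ∈ M.head?, r a b)
    (hMR : ∀ a ∈ M.getLast?, ∀ b ∈ R.head?, r a b) :
    (L ++ M ++ R).IsChain r := by
  rw [List.append_assoc, List.isChain_append, List.isChain_append,
    List.head?_append_of_ne_nil _ hM₀]
  exact ⟨hL, ⟨hM, hR, hMR⟩, hLM⟩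

section blk

variable {bs : List (List α)}

theorem blk_succ (n : ℕ) : blk bs (n + 1) = bs.getD n [] := rfl

theorem blk_mem_of_ne_nil {n : ℕ} (h : blk bs n ≠ []) : blk bs n ∈ bs := by
  cases n with
  | zero => exact absurd rfl h
  | succ n =>
    rw [blk_succ] at h ⊢
    by_cases hn : n < bs.length
    · rw [List.getD_eq_getElem _ _ hn]
      exact List.getElem_mem hn
    · exact absurd (List.getD_eq_default _ _ (by omega)) h

theorem blk_isInfix {T : List α} (hbs : ∀ b ∈ bs, b <:+: T) (n : ℕ) : blk bs n <:+: T := by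
  by_cases h : blk bs n = []
  · rw [h]
    exact List.nil_infix
  · exact hbs _ (blk_mem_of_ne_nil h)

theorem flatten_take_eq (n : ℕ) :
    (bs.take n).flatten = (bs.take (n - 1)).flatten ++ blk bs n := by
  cases n with
  | zero => rfl
  | succ n =>
    rw [List.take_add_one, blk_succ, List.getD_eq_getElem?_getD]
    cases bs[n]? <;> simp

theorem flatten_drop_eq (n : ℕ) :
    (bs.drop n).flatten = blk bs (n + 1) ++ (bs.drop (n + 1)).flatten := by
  rw [List.drop_eq_getElem?_toList_append, blk_succ, List.getD_eq_getElem?_getD]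
  cases bs[n]? <;> simp

variable {T : List α}

theorem List.IsChain.unmergeable_getLast?_take_head?_filter (h : bs.IsChain (Unmergeable T))
    (hbs : ∀ b ∈ bs, b <:+: T) {n : ℕ} (hn : n ≤ bs.length) (c : List (List α)) :
    ∀ a ∈ (bs.take (n - 1)).getLast?,
      ∀ b ∈ ((blk bs n :: c).filter (fun l => !l.isEmpty)).head?, Unmergeable T a b := by
  cases n with
  | zero => simp
  | succ n =>
    intro a ha b hb
    have hchain := h.take (n + 1)
    rw [List.take_add_one, List.getElem?_eq_getElem (by omega)] at hchain
    have hab : Unmergeable T a (blk bs (n + 1)) := by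
      rw [blk_succ, List.getD_eq_getElem _ _ (by omega)]
      exact (List.isChain_append.mp hchain).2.2 a (by simpa using ha) _ rfl
    have hne := hab.ne_nil_right (hbs a (List.mem_of_mem_take (List.mem_of_getLast? ha)))
    obtain rfl : b = blk bs (n + 1) := by simpa [hne] using hb.symm
    exact hab

theorem List.IsChain.unmergeable_getLast?_filter_head?_drop (h : bs.IsChain (Unmergeable T))
    (hbs : ∀ b ∈ bs, b <:+: T) (n : ℕ) (c : List (List α)) :
    ∀ a ∈ ((c ++ [blk bs (n + 1)]).filter (fun l => !l.isEmpty)).getLast?,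
      ∀ b ∈ (bs.drop (n + 1)).head?, Unmergeable T a b := by
  intro a ha b hb
  have hn : n + 1 < bs.length := by
    by_contra hn
    simp [List.drop_eq_nil_of_le (not_lt.mp hn)] at hb
  have hchain := h.drop n
  rw [List.drop_eq_getElem_cons (by omega)] at hchain
  have hab : Unmergeable T (blk bs (n + 1)) b := by
    rw [blk_succ, List.getD_eq_getElem _ _ (by omega)]
    exact (List.isChain_cons.mp hchain).1 b hb
  have hne := hab.ne_nil_left (hbs b (List.mem_of_mem_drop (List.mem_of_mem_head? hb)))
  obtain rfl : a = blk bs (n + 1) := by simpa [hne, List.getLast?_append] using ha.symm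
  exact hab

end blk

theorem window_isInfix {T u v : List α} {bs : List (List α)} {i : ℕ} {x y : α}
    (hbs : ∀ b ∈ bs, b <:+: T) (hsplit : blk bs i = u ++ x :: v) (hy : y ∈ T) :
    ∀ t ∈ [blk bs (i - 1), u, [y], v, blk bs (i + 1)], t <:+: T := by
  have hsi : u ++ x :: v <:+: T := hsplit ▸ blk_isInfix hbs i
  simp only [List.mem_cons, List.not_mem_nil, or_false]
  rintro t (rfl | rfl | rfl | rfl | rfl)
  · exact blk_isInfix hbs _
  · exact (List.prefix_append t _).isInfix.trans hsi
  · exact (List.singleton_infix_iff y T).mpr hy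
  · exact ((List.suffix_cons x t).trans (List.suffix_append u _)).isInfix.trans hsi
  · exact blk_isInfix hbs _

abbrev Merges (T : List α) : List (List α) → List (List α) → Prop :=
  Relation.ReflTransGen (MergeStep T)

namespace MergeStep

variable {T : List α} {xs ys : List (List α)}

theorem flatten_eq (h : MergeStep T xs ys) : ys.flatten = xs.flatten := by
  obtain ⟨l₁, l₂, a, b, rfl, rfl, -⟩ := h
  simp

theorem length_add_one (h : MergeStep T xs ys) : ys.length + 1 = xs.length := by
  obtain ⟨l₁, l₂, a, b, rfl, rfl, -⟩ := h
  simp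
  omega

theorem ne_nil (h : MergeStep T xs ys) : ys ≠ [] := by
  obtain ⟨l₁, l₂, a, b, -, rfl, -⟩ := h
  simp

theorem forall_mem (h : MergeStep T xs ys) (hxs : ∀ c ∈ xs, c ≠ [] ∧ c <:+: T) :
    ∀ c ∈ ys, c ≠ [] ∧ c <:+: T := by
  obtain ⟨l₁, l₂, a, b, rfl, rfl, hab⟩ := h
  simp only [List.mem_append, List.mem_cons] at hxs ⊢
  rintro c (hc | rfl | hc)
  · exact hxs c (Or.inl hc)
  · exact ⟨by simp [(hxs a (Or.inr (Or.inl rfl))).1], hab⟩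
  · exact hxs c (Or.inr (Or.inr (Or.inr hc)))

theorem forall_head? (h : MergeStep T xs ys) {a : List α}
    (hxs : ∀ b ∈ xs.head?, Unmergeable T a b) : ∀ b ∈ ys.head?, Unmergeable T a b := by
  obtain ⟨l₁, l₂, b, c, rfl, rfl, -⟩ := h
  cases l₁ with
  | nil =>
    simp only [List.nil_append, List.head?_cons, Option.mem_def, Option.some.injEq,
      forall_eq'] at hxs ⊢
    exact hxs.mono (List.suffix_refl a) (List.prefix_append b c)
  | cons d l₁ => simpa using hxs

theorem forall_getLast? (h : MergeStep T xs ys) {b : List α}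
    (hxs : ∀ a ∈ xs.getLast?, Unmergeable T a b) : ∀ a ∈ ys.getLast?, Unmergeable T a b := by
  obtain ⟨l₁, l₂, a, c, rfl, rfl, -⟩ := h
  cases l₂ with
  | nil =>
    simp [List.getLast?_append] at hxs ⊢
    exact hxs.mono (List.suffix_append a c) (List.prefix_refl b)
  | cons d l₂ => simpa [List.getLast?_append] using hxs

end MergeStep

namespace Merges

variable {T : List α} {xs ys : List (List α)}

theorem flatten_eq (h : Merges T xs ys) : ys.flatten = xs.flatten := by
  induction h with
  | refl => rfl
  | tail _ hst ih => rw [hst.flatten_eq, ih]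

theorem length_le (h : Merges T xs ys) : ys.length ≤ xs.length := by
  induction h with
  | refl => exact le_rfl
  | tail _ hst ih => have := hst.length_add_one; omega

theorem forall_mem (h : Merges T xs ys) (hxs : ∀ c ∈ xs, c ≠ [] ∧ c <:+: T) :
    ∀ c ∈ ys, c ≠ [] ∧ c <:+: T := by
  induction h with
  | refl => exact hxs
  | tail _ hst ih => exact hst.forall_mem ih

theorem forall_head? (h : Merges T xs ys) {a : List α}
    (hxs : ∀ b ∈ xs.head?, Unmergeable T a b) : ∀ b ∈ ys.head?, Unmergeable T a b := by
  induction h with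
  | refl => exact hxs
  | tail _ hst ih => exact hst.forall_head? ih

theorem forall_getLast? (h : Merges T xs ys) {b : List α}
    (hxs : ∀ a ∈ xs.getLast?, Unmergeable T a b) : ∀ a ∈ ys.getLast?, Unmergeable T a b := by
  induction h with
  | refl => exact hxs
  | tail _ hst ih => exact hst.forall_getLast? ih

theorem mergesWithin (h : Merges T xs ys) {n : ℕ} (hn : xs.length ≤ n + 1) :
    MergesWithin T n xs ys := by
  induction h using Relation.ReflTransGen.head_induction_on generalizing n with
  | refl => cases n with
    | zero => rfl
    | succ => exact Or.inl rfl
  | head hst _ ih =>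
    have := hst.length_add_one
    have := List.length_pos_of_ne_nil hst.ne_nil
    obtain ⟨m, rfl⟩ : ∃ m, n = m + 1 := ⟨n - 1, by omega⟩
    exact Or.inr ⟨_, hst, ih (by omega)⟩

end Merges

theorem exists_merges_isChain (T : List α) (xs : List (List α)) :
    ∃ ys, Merges T xs ys ∧ ys.IsChain (Unmergeable T) := by
  induction hn : xs.length using Nat.strong_induction_on generalizing xs with
  | _ n ih =>
  by_cases hxs : xs.IsChain (Unmergeable T)
  · exact ⟨xs, .refl, hxs⟩
  · obtain ⟨a, b, l₁, l₂, rfl, hab⟩ : ∃ a b l₁ l₂, xs = l₁ ++ a :: b :: l₂ ∧ (a ++ b) <:+: T := by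
      simpa [List.isChain_iff_forall_rel_of_append_cons_cons, Unmergeable] using hxs
    have hst : MergeStep T _ _ := ⟨l₁, l₂, a, b, rfl, rfl, hab⟩
    obtain ⟨ys, hm, hys⟩ :=
      ih _ (by rw [← hn, ← hst.length_add_one]; omega) (l₁ ++ (a ++ b) :: l₂) rfl
    exact ⟨ys, .head hst hm, hys⟩

theorem List.IsChain.take_append_append_drop {T : List α} {bs : List (List α)}
    (h : bs.IsChain (Unmergeable T)) (hbs : ∀ b ∈ bs, b <:+: T) {i : ℕ} (hi : i ≤ bs.length)
    {c ts : List (List α)}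
    (hmerge : Merges T ((blk bs (i - 1) :: c ++ [blk bs (i + 1)]).filter (fun l => !l.isEmpty)) ts)
    (hts : ts.IsChain (Unmergeable T)) (hts₀ : ts ≠ []) :
    (bs.take (i - 2) ++ ts ++ bs.drop (i + 1)).IsChain (Unmergeable T) := by
  have hleft := h.unmergeable_getLast?_take_head?_filter hbs (n := i - 1) (by omega)
    (c ++ [blk bs (i + 1)])
  have hright := h.unmergeable_getLast?_filter_head?_drop hbs i (blk bs (i - 1) :: c)
  rw [Nat.sub_sub] at hleft
  exact (h.take _).append_append hts (h.drop _) hts₀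
    (fun a ha => hmerge.forall_head? (hleft a ha))
    (fun a ha b hb => hmerge.forall_getLast? (fun a' ha' => hright a' ha' b hb) a ha)

end MaximalBlockDecomp

theorem maximal_block_decomp_update_general {α : Type*} (S T : List α) (bs : List (List α))
    (hdec : IsMaximalBlockDecomp T bs S)
    (i : ℕ) (hik : i ≤ bs.length)
    (u v : List α) (x : α) (hsplit : blk bs i = u ++ x :: v)
    (y : α) (hy : y ∈ T)
    (S' : List α)
    (hS' : S' = (bs.take (i - 1)).flatten ++ (u ++ y :: v) ++ (bs.drop i).flatten) :
    ∃ ts : List (List α),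
      1 ≤ ts.length ∧ ts.length ≤ 5 ∧
      ts.flatten = blk bs (i - 1) ++ u ++ y :: v ++ blk bs (i + 1) ∧
      (∀ t ∈ ts, t ≠ [] ∧ t <:+: T) ∧
      IsMaximalBlockDecomp T (bs.take (i - 2) ++ ts ++ bs.drop (i + 1)) S' ∧
      MergesWithin T 4
        (([blk bs (i - 1), u, [y], v, blk bs (i + 1)]).filter (fun l => !l.isEmpty)) ts := by
  obtain ⟨⟨-, hblocks⟩, hchain⟩ := isMaximalBlockDecomp_iff.mp hdec
  have hinfix : ∀ b ∈ bs, b <:+: T := fun b hb => (hblocks b hb).2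
  set xs := [blk bs (i - 1), u, [y], v, blk bs (i + 1)].filter (fun l => !l.isEmpty)
  have hxs_mem : ∀ t ∈ xs, t ≠ [] ∧ t <:+: T := fun t ht =>
    ⟨by simpa using (List.mem_filter.mp ht).2,
      window_isInfix hinfix hsplit hy t (List.mem_filter.mp ht).1⟩
  obtain ⟨ts, hmerge, hts⟩ := exists_merges_isChain T xs
  have hts_flat : ts.flatten = blk bs (i - 1) ++ u ++ y :: v ++ blk bs (i + 1) := by
    rw [hmerge.flatten_eq, List.flatten_filter_not_isEmpty]
    simp
  have hts_ne : ts ≠ [] := by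
    rintro rfl
    simp at hts_flat
  have hxs_len : xs.length ≤ 5 := List.length_filter_le _ _
  refine ⟨ts, List.length_pos_of_ne_nil hts_ne, hmerge.length_le.trans hxs_len, hts_flat,
    hmerge.forall_mem hxs_mem, isMaximalBlockDecomp_iff.mpr ⟨⟨?_, ?_⟩, ?_⟩,
    hmerge.mergesWithin (by omega)⟩
  · rw [hS', flatten_take_eq, flatten_drop_eq i, Nat.sub_sub]
    simp [hts_flat]
  · simp only [List.mem_append]
    rintro b ((hb | hb) | hb)
    · exact hblocks b (List.mem_of_mem_take hb)
    · exact hmerge.forall_mem hxs_mem b hb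
    · exact hblocks b (List.mem_of_mem_drop hb)
  · exact hchain.take_append_append_drop hinfix hik (c := [u, [y], v]) hmerge hts hts_ne

/-- Updating a maximal block decomposition after a substitution. Let
`(s_1, …, s_k)` be a maximal block decomposition of `S` with respect to `T`
(with `s_0 = s_{k+1} = ε`), let `s_i = u x v` with `x` a single letter, let `y`
be a letter occurring in `T`, and let `S'` be obtained from `S` by replacing
this occurrence of `x` by `y`. Then there exists a sequence `(t_1, …, t_m)` of
nonempty substrings of `T`, with `1 ≤ m ≤ 5`, whose concatenation is
`s_{i-1} u y v s_{i+1}`, such that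
`(s_1, …, s_{i-2}, t_1, …, t_m, s_{i+2}, …, s_k)` is a maximal block
decomposition of `S'` with respect to `T`; moreover, `(t_1, …, t_m)` is
obtained from `(s_{i-1}, u, y, v, s_{i+1})` (with empty entries removed) by at
most four merges of adjacent entries whose concatenation is a substring of `T`. -/
theorem maximal_block_decomp_update {α : Type*} (S T : List α) (bs : List (List α))
    (hdec : IsMaximalBlockDecomp T bs S)
    (i : ℕ) (hi1 : 1 ≤ i) (hik : i ≤ bs.length)
    (u v : List α) (x : α) (hsplit : blk bs i = u ++ x :: v)
    (y : α) (hy : y ∈ T)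
    (S' : List α)
    (hS' : S' = (bs.take (i - 1)).flatten ++ (u ++ y :: v) ++ (bs.drop i).flatten) :
    ∃ ts : List (List α),
      1 ≤ ts.length ∧ ts.length ≤ 5 ∧
      ts.flatten = blk bs (i - 1) ++ u ++ y :: v ++ blk bs (i + 1) ∧
      (∀ t ∈ ts, t ≠ [] ∧ t <:+: T) ∧
      IsMaximalBlockDecomp T (bs.take (i - 2) ++ ts ++ bs.drop (i + 1)) S' ∧
      MergesWithin T 4
        (([blk bs (i - 1), u, [y], v, blk bs (i + 1)]).filter (fun l => !l.isEmpty)) ts :=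
  maximal_block_decomp_update_general S T bs hdec i hik u v x hsplit y hy S' hS'
end

section
/- Let b ≥ 1 and d ≥ 1 be integers, let G be the butterfly graph of degree b and depth d, and let H be a subgraph of G (i.e., a directed graph on the same vertex set whose edge set is a subset of the edge set of G). Then for every s, t ∈ [b]^d, the sink (d, t) is reachable from the source (0, s) by a directed path in H if and only if for every i ∈ {0, 1, …, d−1} the edge from (i, (t_1, …, t_i, s_{i+1}, …, s_d)) to (i+1, (t_1, …, t_{i+1}, s_{i+2}, …, s_d)) belongs to H. -/
/-!
Every edge of the butterfly graph leaving level `i` changes only coordinate `i + 1` and goes up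
one level. Hence along a path from `(0, s)` to `(d, t)` the coordinates `1, …, i` can no longer
change after level `i`, while the coordinates `i + 1, …, d` have not yet been touched: the vertex
at level `i` is forced to be `(i, (t_1, …, t_i, s_{i+1}, …, s_d))`, and the path is unique.
-/

/-- Vertices of the butterfly graph of degree `b` and depth `d`: pairs `(i, r)`
of a level `i ∈ {0, …, d}` and a vector `r ∈ [b]^d` (coordinate `j + 1` of the
vector is modeled by the index `j : Fin d`). -/
abbrev BVert (b d : ℕ) := ℕ × (Fin d → Fin b)

/-- The edge relation of the butterfly graph of degree `b` and depth `d`: there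
is an edge from `(i, r)` to `(i + 1, p)` (with `i + 1 ≤ d`) whenever `r` and `p`
agree on all coordinates other than the `(i+1)`-st one (which is modeled by the
index `i : Fin d`). -/
def butterflyEdge (b d : ℕ) (u v : BVert b d) : Prop :=
  v.1 = u.1 + 1 ∧ v.1 ≤ d ∧ ∀ j : Fin d, (j : ℕ) ≠ u.1 → u.2 j = v.2 j

/-- `p` is a directed path from `u` to `v` with respect to the edge relation `E`:
a nonempty sequence of vertices starting at `u`, ending at `v`, with each
consecutive pair joined by an edge. -/
def IsDiPath {V : Type*} (E : V → V → Prop) (u v : V) (p : List V) : Prop :=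
  p.head? = some u ∧ p.getLast? = some v ∧ p.Chain' E

open Relation

theorem exists_isDiPath_iff_reflTransGen {V : Type*} {E : V → V → Prop} {u v : V} :
    (∃ p, IsDiPath E u v p) ↔ ReflTransGen E u v := by
  constructor
  · rintro ⟨p, hhead, hlast, hchain⟩
    obtain ⟨l, rfl⟩ := List.head?_eq_some_iff.mp hhead
    rw [List.getLast?_eq_some_getLast (List.cons_ne_nil u l), Option.some.injEq] at hlast
    exact List.relationReflTransGen_of_exists_isChain_cons l hchain hlast
  · intro h
    obtain ⟨l, hchain, hlast⟩ := List.exists_isChain_cons_of_relationReflTransGen h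
    exact ⟨u :: l, rfl, by rw [List.getLast?_eq_some_getLast (List.cons_ne_nil u l), hlast], hchain⟩

theorem reflTransGen_of_forall_lt {V : Type*} {E : V → V → Prop} {f : ℕ → V} {n : ℕ}
    (h : ∀ i < n, E (f i) (f (i + 1))) : ReflTransGen E (f 0) (f n) :=
  ReflTransGen.lift f (fun _ _ hij => hij) _ _
    (reflTransGen_of_succ_of_le (fun i j => E (f i) (f j)) (fun i hi => h i hi.2) n.zero_le)

namespace Butterfly

variable {b d : ℕ}

def switchVertex (s t : Fin d → Fin b) (i : ℕ) : BVert b d :=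
  (i, fun j => if (j : ℕ) < i then t j else s j)

theorem switchVertex_zero (s t : Fin d → Fin b) : switchVertex s t 0 = (0, s) := by
  simp [switchVertex]

theorem switchVertex_depth (s t : Fin d → Fin b) : switchVertex s t d = (d, t) := by
  simp [switchVertex]

theorem fst_le_and_snd_eq_of_reflTransGen {u v : BVert b d}
    (h : ReflTransGen (butterflyEdge b d) u v) :
    u.1 ≤ v.1 ∧ ∀ j : Fin d, (j : ℕ) < u.1 → u.2 j = v.2 j := by
  induction h with
  | refl => exact ⟨le_rfl, fun _ _ => rfl⟩
  | tail _ hwv ih =>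
    obtain ⟨hlevel, -, hagree⟩ := hwv
    exact ⟨by omega, fun j hj => (ih.2 j hj).trans (hagree j (by omega))⟩

theorem eq_switchVertex_succ {s t : Fin d → Fin b} {i : ℕ} {y : BVert b d}
    (hedge : butterflyEdge b d (switchVertex s t i) y)
    (hy : ReflTransGen (butterflyEdge b d) y (d, t)) :
    y = switchVertex s t (i + 1) := by
  obtain ⟨hlevel, -, hagree⟩ := hedge
  obtain ⟨-, hlow⟩ := fst_le_and_snd_eq_of_reflTransGen hy
  refine Prod.ext hlevel (funext fun j => ?_)
  by_cases hj : (j : ℕ) < i + 1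
  · simp only [switchVertex, if_pos hj]
    exact hlow j (by rwa [hlevel])
  · have := hagree j (by show (j : ℕ) ≠ i; omega)
    simp only [switchVertex, if_neg hj] at this ⊢
    rw [← this, if_neg (by omega)]

theorem edge_of_reflTransGen {H : BVert b d → BVert b d → Prop} (hH : H ≤ butterflyEdge b d)
    {s t : Fin d → Fin b} {i k : ℕ} (h : ReflTransGen H (switchVertex s t i) (d, t))
    (hik : i ≤ k) (hkd : k < d) :
    H (switchVertex s t k) (switchVertex s t (k + 1)) := by
  generalize hu : switchVertex s t i = u at h
  induction h using ReflTransGen.head_induction_on generalizing i with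
  | refl =>
    have : i = d := congrArg Prod.fst hu
    omega
  | head hedge hrest ih =>
    subst hu
    have hnext := eq_switchVertex_succ (hH _ _ hedge) (ReflTransGen.mono hH _ _ hrest)
    rcases hik.eq_or_lt with rfl | hlt
    · rwa [hnext] at hedge
    · exact ih (i := i + 1) (by omega) hnext.symm

end Butterfly

theorem butterfly_reachability_general (b d : ℕ)
    (H : BVert b d → BVert b d → Prop)
    (hH : ∀ u v, H u v → butterflyEdge b d u v)
    (s t : Fin d → Fin b) :
    (∃ p : List (BVert b d), IsDiPath H (0, s) (d, t) p) ↔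
      ∀ i < d, H (i, fun j : Fin d => if (j : ℕ) < i then t j else s j)
                 (i + 1, fun j : Fin d => if (j : ℕ) < i + 1 then t j else s j) := by
  rw [exists_isDiPath_iff_reflTransGen]
  constructor
  · intro h i hi
    rw [← Butterfly.switchVertex_zero s t] at h
    exact Butterfly.edge_of_reflTransGen hH h i.zero_le hi
  · intro h
    rw [← Butterfly.switchVertex_zero s t, ← Butterfly.switchVertex_depth s t]
    exact reflTransGen_of_forall_lt h

/-- Let `H` be a subgraph of the butterfly graph of degree `b ≥ 1` and depth
`d ≥ 1`. The sink `(d, t)` is reachable from the source `(0, s)` by a directed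
path in `H` if and only if, for every `i ∈ {0, …, d - 1}`, the edge from
`(i, (t_1, …, t_i, s_{i+1}, …, s_d))` to `(i + 1, (t_1, …, t_{i+1}, s_{i+2}, …, s_d))`
belongs to `H`. -/
theorem butterfly_reachability (b d : ℕ) (hb : 1 ≤ b) (hd : 1 ≤ d)
    (H : BVert b d → BVert b d → Prop)
    (hH : ∀ u v, H u v → butterflyEdge b d u v)
    (s t : Fin d → Fin b) :
    (∃ p : List (BVert b d), IsDiPath H (0, s) (d, t) p) ↔
      ∀ i < d, H (i, fun j : Fin d => if (j : ℕ) < i then t j else s j)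
                 (i + 1, fun j : Fin d => if (j : ℕ) < i + 1 then t j else s j) :=
  butterfly_reachability_general b d H hH s t
end
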